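/- arXiv:0905.2665 — 4 statements merged into one kernel-verified Lean document; each statement's English description precedes it below -/
import Mathlib

section
/- Let G : A^A × A^A → A be a total bisequential function. Then there exists φ_G ∈ A^A such that for all α, β ∈ A^A: φ_G α is defined (in the application of K₂(A)) and φ(φ_G α, β) = G(α, β). -/
open Classical

noncomputable section

namespace OostenK2

universe u

/-! ### Finite partial functions -/

/-- Finite partial functions `A ⇀ A`, as finite functional graphs,
ordered by inclusion of graphs. -/
abbrev FPF (A : Type u) : Type u :=
  {p : Set (A × A) // (∀ ⦃a b b'⦄, (a, b) ∈ p → (a, b') ∈ p → b = b') ∧ p.Finite}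

variable {A : Type u}

/-- The domain of a finite partial function. -/
def FPF.dom (p : FPF A) : Set A := Prod.fst '' p.val

/-- The empty finite partial function (the root of sequential trees). -/
def FPF.empty (A : Type u) : FPF A :=
  ⟨∅, fun _ _ _ h => absurd h (Set.notMem_empty _), Set.finite_empty⟩

/-- A total function `α` extends the finite partial function `p`. -/
def agrees (α : A → A) (p : FPF A) : Prop := ∀ ⦃a b⦄, (a, b) ∈ p.val → α a = b

/-- A partial function `β` extends the finite partial function `p`. -/
def agreesP (β : A → Option A) (p : FPF A) : Prop :=
  ∀ ⦃a b⦄, (a, b) ∈ p.val → β a = some b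

/-- Two finite partial functions are compatible if their union is a function. -/
def compatFPF (s t : FPF A) : Prop :=
  ∀ ⦃a b b'⦄, (a, b) ∈ s.val → (a, b') ∈ t.val → b = b'

/-! ### Trees -/

section Trees

variable {X : Type*} [PartialOrder X]

/-- A leaf of `T`: an element of `T` with no strict extension in `T`. -/
def IsLeaf (T : Set X) (p : X) : Prop := p ∈ T ∧ ¬∃ q ∈ T, p < q

/-- `q` is an immediate successor of `p` in `T`. -/
def ImmSucc (T : Set X) (p q : X) : Prop :=
  q ∈ T ∧ p < q ∧ ¬∃ t ∈ T, p < t ∧ t < q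

/-- `T` is a tree with root `root`: the root belongs to `T`, lies below every
element, and the predecessors of any element form a chain. -/
def IsTreeOn (root : X) (T : Set X) : Prop :=
  root ∈ T ∧ (∀ p ∈ T, root ≤ p) ∧ ∀ p ∈ T, IsChain (· ≤ ·) {t | t ∈ T ∧ t ≤ p}

/-- A tree is well-founded iff it has no infinite strictly increasing path. -/
def WellFoundedTree (T : Set X) : Prop :=
  ¬∃ f : ℕ → X, (∀ n, f n ∈ T) ∧ StrictMono f

end Trees

/-- A sequential tree: a tree of finite partial functions, rooted at the empty
function, in which all immediate successors of a non-leaf `p` have domain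
`dom p ∪ {a}` for a single `a ∉ dom p`. -/
def IsSeqTree (T : Set (FPF A)) : Prop :=
  IsTreeOn (FPF.empty A) T ∧
  ∀ p ∈ T, ¬IsLeaf T p →
    ∃ a ∉ FPF.dom p, ∀ q, ImmSucc T p q → FPF.dom q = insert a (FPF.dom p)

/-- A total sequential tree: the immediate successors of a non-leaf `p` are
*all* extensions of `p` with domain `dom p ∪ {a}`. -/
def IsTotalSeqTree (T : Set (FPF A)) : Prop :=
  IsTreeOn (FPF.empty A) T ∧
  ∀ p ∈ T, ¬IsLeaf T p →
    ∃ a ∉ FPF.dom p,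
      ∀ q : FPF A, ImmSucc T p q ↔ p < q ∧ FPF.dom q = insert a (FPF.dom p)

/-- `Φ` (as a relation `(A → A) → A → Prop`) is a partial sequential function:
`Φ α = b` iff the path of `α` through some total sequential tree `T` ends in a
leaf `v` with `F v = b`. -/
def SeqRel (Φ : (A → A) → A → Prop) : Prop :=
  ∃ (T : Set (FPF A)) (F : FPF A → A), IsTotalSeqTree T ∧
    ∀ α b, Φ α b ↔ ∃ v, IsLeaf T v ∧ agrees α v ∧ F v = b

/-- A total bisequential tree: pairs of finite partial functions ordered by
pairwise inclusion; at every non-leaf, either the first or the second component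
is interrogated at a single new argument, with all possible answers present. -/
def IsTotalBiTree (T : Set (FPF A × FPF A)) : Prop :=
  IsTreeOn (FPF.empty A, FPF.empty A) T ∧
  ∀ p ∈ T, ¬IsLeaf T p →
    (∃ a ∉ FPF.dom p.1, ∀ q : FPF A × FPF A,
        ImmSucc T p q ↔ q.2 = p.2 ∧ p.1 ≤ q.1 ∧ FPF.dom q.1 = insert a (FPF.dom p.1)) ∨
    (∃ b ∉ FPF.dom p.2, ∀ q : FPF A × FPF A,
        ImmSucc T p q ↔ q.1 = p.1 ∧ p.2 ≤ q.2 ∧ FPF.dom q.2 = insert b (FPF.dom p.2))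

/-- `G` is a total bisequential function. -/
def BiSeqTotal (G : (A → A) → (A → A) → A) : Prop :=
  ∃ (T : Set (FPF A × FPF A)) (F : FPF A × FPF A → A), IsTotalBiTree T ∧
    ∀ α β, ∃ v, IsLeaf T v ∧ agrees α v.1 ∧ agrees β v.2 ∧ G α β = F v

/-! ### Interrogations (total functions)

Throughout, `mk : List A → A` is an injective coding of finite sequences,
`qp b` is the code `⟨q,b⟩` of a query and `rp c` the code `⟨r,c⟩` of a result. -/

/-- `L` is an interrogation of `β` by `α`. -/
def Interrog (mk : List A → A) (qp : A → A) (α β : A → A) (L : List A) : Prop :=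
  ∀ j (hj : j < L.length), ∃ b, α (mk (L.take j)) = qp b ∧ β b = L[j]'hj

/-- `φ_α(β) = c` via interrogations. -/
def phiRel (mk : List A → A) (qp rp : A → A) (α β : A → A) (c : A) : Prop :=
  ∃ L, Interrog mk qp α β L ∧ α (mk L) = rp c

/-- `L` is an `a`-interrogation of `β` by `α`. -/
def AInterrog (mk : List A → A) (qp : A → A) (a : A) (α β : A → A) (L : List A) : Prop :=
  ∀ j (hj : j < L.length), ∃ b, α (mk (a :: L.take j)) = qp b ∧ β b = L[j]'hj

/-- `φ^a(α,β) = c` via `a`-interrogations. -/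
def phiA (mk : List A → A) (qp rp : A → A) (a : A) (α β : A → A) (c : A) : Prop :=
  ∃ L, AInterrog mk qp a α β L ∧ α (mk (a :: L)) = rp c

/-- The application of `K₂(A)`: `αβ` is defined with value `γ` iff
`φ^a(α,β) = γ a` for every `a`. -/
def AppRel (mk : List A → A) (qp rp : A → A) (α β γ : A → A) : Prop :=
  ∀ a, phiA mk qp rp a α β (γ a)

/-! ### Partial combinatory algebras (abstractly) -/

/-- A set with a partial binary application. -/
structure PCAStruct (X : Type*) where
  app : X → X → Part X

/-- Extension of the application to `Part`; `Part`-equality is Kleene equality. -/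
def pap {X : Type*} (S : PCAStruct X) (u v : Part X) : Part X :=
  u.bind fun a => v.bind fun b => S.app a b

/-- `S` is a partial combinatory algebra: there are `k`, `s` with
`kxy = x` (everywhere defined), `sxy` defined, and `sxyz ≃ (xz)(yz)`. -/
def IsPCA {X : Type*} (S : PCAStruct X) : Prop :=
  ∃ k s : X,
    (∀ x y : X, pap S (S.app k x) (Part.some y) = Part.some x) ∧
    (∀ x y : X, (pap S (S.app s x) (Part.some y)).Dom) ∧
    (∀ x y z : X,
      pap S (pap S (S.app s x) (Part.some y)) (Part.some z)
        = pap S (S.app x z) (S.app y z))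

/-- `t`, `f` are Booleans of `S`: distinct, with a definition-by-cases combinator. -/
def IsBooleans {X : Type*} (S : PCAStruct X) (t f : X) : Prop :=
  t ≠ f ∧ ∃ C : X, ∀ a b : X,
    pap S (pap S (S.app C t) (Part.some a)) (Part.some b) = Part.some a ∧
    pap S (pap S (S.app C f) (Part.some a)) (Part.some b) = Part.some b

/-- Applicative morphism `γ : S → T`: a total relation such that some realizer
`r` tracks application. -/
def IsAppMor {X Y : Type*} (S : PCAStruct X) (T : PCAStruct Y) (γ : X → Set Y) : Prop :=
  (∀ x, (γ x).Nonempty) ∧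
  ∃ r : Y, ∀ x x' z : X, z ∈ S.app x x' → ∀ b ∈ γ x, ∀ b' ∈ γ x',
    ∃ w, w ∈ pap T (T.app r b) (Part.some b') ∧ w ∈ γ z

/-- The preorder on applicative morphisms. -/
def morLE {X Y : Type*} (T : PCAStruct Y) (γ γ' : X → Set Y) : Prop :=
  ∃ s : Y, ∀ x : X, ∀ b ∈ γ x, ∃ c, c ∈ T.app s b ∧ c ∈ γ' x

def morEquiv {X Y : Type*} (T : PCAStruct Y) (γ γ' : X → Set Y) : Prop :=
  morLE T γ γ' ∧ morLE T γ' γ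

/-- Composition of applicative morphisms (as total relations). -/
def morComp {X Y Z : Type*} (γ : X → Set Y) (ε : Y → Set Z) : X → Set Z :=
  fun x => ⋃ y ∈ γ x, ε y

/-- Decidability of a morphism w.r.t. chosen Booleans. -/
def IsDecidableMor {X Y : Type*} (T : PCAStruct Y) (γ : X → Set Y)
    (tX fX : X) (tY fY : Y) : Prop :=
  ∃ d : Y, (∀ b ∈ γ tX, T.app d b = Part.some tY) ∧
    (∀ b ∈ γ fX, T.app d b = Part.some fY)

/-- `rf` represents the partial function `f : X ⇀ X` w.r.t. `γ`. -/
def RepresentsPFun {X Y : Type*} (T : PCAStruct Y) (γ : X → Set Y)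
    (f : X → Option X) (rf : Y) : Prop :=
  ∀ a x, f a = some x → ∀ b ∈ γ a, ∃ c, c ∈ T.app rf b ∧ c ∈ γ x

/-- The pca `K₂(A)` on `A^A` (application via `a`-interrogations). -/
def K2 (mk : List A → A) (qp rp : A → A) : PCAStruct (A → A) where
  app α β := ⟨∀ a, ∃ c, phiA mk qp rp a α β c, fun h a => (h a).choose⟩

/-! ### Interrogations for partial functions -/

/-- Interrogation of a partial `β` by a partial `α`. -/
def PInterrog (mk : List A → A) (qp : A → A) (α β : A → Option A) (L : List A) : Prop :=
  ∀ j (hj : j < L.length), ∃ b, α (mk (L.take j)) = some (qp b) ∧ β b = some (L[j]'hj)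

/-- `φ_α(β) = c` for partial functions. -/
def phiPRel (mk : List A → A) (qp rp : A → A) (α β : A → Option A) (c : A) : Prop :=
  ∃ L, PInterrog mk qp α β L ∧ α (mk L) = some (rp c)

/-- `a`-interrogation of a partial `β` by a partial `α`. -/
def PAInterrog (mk : List A → A) (qp : A → A) (a : A) (α β : A → Option A)
    (L : List A) : Prop :=
  ∀ j (hj : j < L.length), ∃ b, α (mk (a :: L.take j)) = some (qp b) ∧ β b = some (L[j]'hj)

/-- `φ^a(α,β) = c` for partial functions. -/
def phiPA (mk : List A → A) (qp rp : A → A) (a : A) (α β : A → Option A) (c : A) : Prop :=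
  ∃ L, PAInterrog mk qp a α β L ∧ α (mk (a :: L)) = some (rp c)

/-- The (total!) application of `K₂^p(A)` on partial functions. -/
def K2pApp (mk : List A → A) (qp rp : A → A) (α β : A → Option A) : A → Option A :=
  fun a => if h : ∃ c, phiPA mk qp rp a α β c then some h.choose else none

/-- `K₂^p(A)` as a `PCAStruct` (with everywhere-defined application). -/
def K2p (mk : List A → A) (qp rp : A → A) : PCAStruct (A → Option A) :=
  ⟨fun α β => Part.some (K2pApp mk qp rp α β)⟩

/-! ### A pca with standard structure (Booleans, pairing, tuple coding, recursion) -/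

/-- A pca together with the standard derived structure: Booleans with a case
combinator, pairing, an injective standard tuple coding with combinators
manipulating it, and a fixed-point combinator. All of these exist in any
(nontrivial) pca. -/
structure StdPCA (A : Type u) where
  S : PCAStruct A
  isPCA : IsPCA S
  t : A
  f : A
  t_ne_f : t ≠ f
  Cc : A
  C_t : ∀ a b : A, pap S (pap S (S.app Cc t) (Part.some a)) (Part.some b) = Part.some a
  C_f : ∀ a b : A, pap S (pap S (S.app Cc f) (Part.some a)) (Part.some b) = Part.some b
  pairF : A → A → A
  Pc : A
  P0 : A
  P1 : A
  P_spec : ∀ x y : A, pap S (S.app Pc x) (Part.some y) = Part.some (pairF x y)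
  P0_spec : ∀ x y : A, S.app P0 (pairF x y) = Part.some x
  P1_spec : ∀ x y : A, S.app P1 (pairF x y) = Part.some y
  tup : List A → A
  tup_inj : Function.Injective tup
  CONS : A
  CONS_spec : ∀ (x : A) (L : List A),
    pap S (S.app CONS x) (Part.some (tup L)) = Part.some (tup (x :: L))
  SNOC : A
  SNOC_spec : ∀ (L : List A) (y : A),
    pap S (S.app SNOC (tup L)) (Part.some y) = Part.some (tup (L ++ [y]))
  Zc : A
  Z_spec : ∀ g : A, (S.app Zc g).Dom ∧ ∀ zg ∈ S.app Zc g, ∀ x : A,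
    S.app zg x = pap S (S.app g zg) (Part.some x)

/-- The partial function `x ↦ a·x` represented by `a ∈ A`. -/
def abar (P : StdPCA A) (a : A) : A → Option A :=
  fun x => if h : (P.S.app a x).Dom then some ((P.S.app a x).get h) else none

/-- An `x`-interrogation of the oracle `g : A ⇀ A` by `a ∈ A`, inside the pca. -/
def OInterrog (P : StdPCA A) (g : A → Option A) (a x : A) (L : List A) : Prop :=
  ∀ j (hj : j < L.length), ∃ v,
    P.S.app a (P.tup (x :: L.take j)) = Part.some (P.pairF P.f v) ∧ g v = some (L[j]'hj)

/-- The oracle application of `A[g]` : `a ·^g x = c`. -/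
def oapp (P : StdPCA A) (g : A → Option A) (a x c : A) : Prop :=
  ∃ L, OInterrog P g a x L ∧ P.S.app a (P.tup (x :: L)) = Part.some (P.pairF P.t c)

/-- `fn ≤_T g` : `fn` is representable in `A[g]`. -/
def leT (P : StdPCA A) (fn g : A → Option A) : Prop :=
  ∃ a : A, ∀ x y, fn x = some y → oapp P g a x y

/-- `j` is the join `f ⊔ g`. -/
def JoinSpec (P : StdPCA A) (f g j : A → Option A) : Prop :=
  (∀ x, j (P.pairF P.t x) = f x) ∧ (∀ x, j (P.pairF P.f x) = g x) ∧
  (∀ y, (∀ x, y ≠ P.pairF P.t x ∧ y ≠ P.pairF P.f x) → j y = none)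

/-- `K₂(A)` (built from the coding `mk`, `q`, `r`) is compatible with the pca
structure on `A`: elements of `A` translate between the codings and between
`q, r` and `⊥, ⊤`. -/
def CompatCoding (P : StdPCA A) (mk : List A → A) (q r : A) : Prop :=
  (∃ a : A, ∀ L, P.S.app a (mk L) = Part.some (P.tup L)) ∧
  (∃ b : A, ∀ L, P.S.app b (P.tup L) = Part.some (mk L)) ∧
  (∃ c : A, P.S.app c q = Part.some P.f ∧ P.S.app c r = Part.some P.t)
/-!
The tree of a total bisequential `G` has no infinite branch, since such a branch would be
followed by a pair `(α, β)` whose leaf lies above all of its nodes. Hence the tree unfolds into a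
well-founded dialogue, asking `α`- and `β`-queries, that computes `G`. Answering the `α`-queries
by a fixed `α` leaves a dialogue in `β`; its neighbourhood function `γ`, which replies to a list
of answers with the next query `⟨q, b⟩` or the result `⟨r, c⟩`, interrogates `β` to `G(α, β)`.
For a fixed list `w` of `β`-answers, `γ⟨w⟩` is in turn computed by a dialogue in `α`, and `φ_G`
replies to `⟨a, w'⟩` as the neighbourhood function of the dialogue attached to `a = ⟨w⟩`.
-/

section Trees

variable {X : Type*} [PartialOrder X] {T : Set X} {p v : X}

theorem exists_immSucc_le (hfin : {t | t ≤ v}.Finite) (hv : v ∈ T) (hpv : p < v) :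
    ∃ s, ImmSucc T p s ∧ s ≤ v := by
  have hfin' : {t | t ∈ T ∧ p < t ∧ t ≤ v}.Finite := hfin.subset fun _ ht => ht.2.2
  obtain ⟨s, ⟨hsT, hps, hsv⟩, hmin⟩ := hfin'.exists_minimal ⟨v, hv, hpv, le_rfl⟩
  refine ⟨s, ⟨hsT, hps, ?_⟩, hsv⟩
  rintro ⟨t, htT, hpt, hts⟩
  exact hts.not_ge (hmin ⟨htT, hpt, hts.le.trans hsv⟩ hts.le)

theorem WellFoundedTree.wellFounded (h : WellFoundedTree T) :
    WellFounded fun s p : X => s ∈ T ∧ p < s :=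
  wellFounded_iff_isEmpty_descending_chain.mpr ⟨fun ⟨f, hf⟩ =>
    h ⟨fun n => f (n + 1), fun n => (hf n).1, strictMono_nat_of_lt_succ fun n => (hf (n + 1)).2⟩⟩

end Trees

namespace FPF

theorem mem_dom {p : FPF A} {a : A} : a ∈ p.dom ↔ ∃ b, (a, b) ∈ p.val :=
  ⟨fun ⟨⟨_, b⟩, hb, ha⟩ => ⟨b, ha ▸ hb⟩, fun ⟨b, hb⟩ => ⟨(a, b), hb, rfl⟩⟩

theorem finite_setOf_le (v : FPF A) : {s | s ≤ v}.Finite :=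
  v.prop.2.finite_subsets.preimage Subtype.val_injective.injOn

theorem val_subset_of_dom_eq_insert {p s t : FPF A} {a y : A} (hps : p ≤ s) (hpt : p ≤ t)
    (hsd : s.dom = insert a p.dom) (hsy : (a, y) ∈ s.val) (hty : (a, y) ∈ t.val) :
    s.val ⊆ t.val := by
  rintro ⟨x, z⟩ hxz
  have hx : x ∈ insert a p.dom := hsd ▸ mem_dom.2 ⟨z, hxz⟩
  rcases hx with rfl | hx
  · rwa [s.prop.1 hxz hsy]
  · obtain ⟨z', hz'⟩ := mem_dom.1 hx
    rw [s.prop.1 hxz (hps hz')]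
    exact hpt hz'

theorem eq_of_dom_eq_insert {p s t : FPF A} {a y : A} (hps : p ≤ s) (hpt : p ≤ t)
    (hsd : s.dom = insert a p.dom) (htd : t.dom = insert a p.dom)
    (hsy : (a, y) ∈ s.val) (hty : (a, y) ∈ t.val) : s = t :=
  Subtype.ext <| (val_subset_of_dom_eq_insert hps hpt hsd hsy hty).antisymm
    (val_subset_of_dom_eq_insert hpt hps htd hty hsy)

end FPF

theorem finite_setOf_le_pair (v : FPF A × FPF A) : {t | t ≤ v}.Finite :=
  ((FPF.finite_setOf_le v.1).prod (FPF.finite_setOf_le v.2)).subset fun _ ht => ht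

/-- Queries are `inl a` (asking for `α a`) and `inr b` (asking for `β b`); accordingly an oracle
`o : A ⊕ A → A` stands for the pair `(o ∘ inl, o ∘ inr)`. -/
def Answers (s : FPF A × FPF A) : A ⊕ A → A → Prop
  | .inl a, y => (a, y) ∈ s.1.val
  | .inr b, y => (b, y) ∈ s.2.val

def Consistent (o : A ⊕ A → A) (s : FPF A × FPF A) : Prop :=
  ∀ x y, Answers s x y → o x = y

def Queries (T : Set (FPF A × FPF A)) (p : FPF A × FPF A) : A ⊕ A → Prop
  | .inl a => ∀ s, ImmSucc T p s → s.2 = p.2 ∧ s.1.dom = insert a p.1.dom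
  | .inr b => ∀ s, ImmSucc T p s → s.1 = p.1 ∧ s.2.dom = insert b p.2.dom

section BiTrees

variable {T : Set (FPF A × FPF A)} {o : A ⊕ A → A} {p s t v : FPF A × FPF A} {x : A ⊕ A}
  {y y' : A}

theorem Answers.mono (hst : s ≤ t) (h : Answers s x y) : Answers t x y := by
  cases x
  exacts [hst.1 h, hst.2 h]

theorem Answers.unique (h : Answers s x y) (h' : Answers s x y') : y = y' := by
  cases x
  exacts [s.1.prop.1 h h', s.2.prop.1 h h']

theorem Consistent.mono (hst : s ≤ t) (ht : Consistent o t) : Consistent o s :=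
  fun x y h => ht x y (h.mono hst)

theorem Consistent.of_agrees {α β : A → A} (hα : agrees α s.1) (hβ : agrees β s.2) :
    Consistent (Sum.elim α β) s := by
  rintro (a | b) y h
  exacts [hα h, hβ h]

theorem exists_consistent_of_monotone {f : ℕ → FPF A × FPF A} (hf : Monotone f) :
    ∃ o, ∀ n, Consistent o (f n) := by
  refine ⟨fun x => if h : ∃ n y, Answers (f n) x y then h.choose_spec.choose else x.elim id id,
    fun n x y hy => ?_⟩
  have h : ∃ n y, Answers (f n) x y := ⟨n, y, hy⟩
  dsimp only
  rw [dif_pos h]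
  exact (h.choose_spec.choose_spec.mono (hf (le_max_left _ n))).unique
    (hy.mono (hf (le_max_right _ n)))

theorem IsTotalBiTree.exists_queries (hT : IsTotalBiTree T) (hp : p ∈ T)
    (hnl : ¬IsLeaf T p) : ∃ x, Queries T p x := by
  rcases hT.2 p hp hnl with ⟨a, -, h⟩ | ⟨b, -, h⟩
  · exact ⟨.inl a, fun s hs => ⟨((h s).1 hs).1, ((h s).1 hs).2.2⟩⟩
  · exact ⟨.inr b, fun s hs => ⟨((h s).1 hs).1, ((h s).1 hs).2.2⟩⟩

theorem Queries.exists_answers (h : Queries T p x) (hs : ImmSucc T p s) :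
    ∃ y, Answers s x y := by
  cases x with
  | inl a => exact FPF.mem_dom.1 ((h s hs).2 ▸ Set.mem_insert a _)
  | inr b => exact FPF.mem_dom.1 ((h s hs).2 ▸ Set.mem_insert b _)

theorem Queries.eq_of_answers (h : Queries T p x) (hs : ImmSucc T p s) (ht : ImmSucc T p t)
    (hsy : Answers s x y) (hty : Answers t x y) : s = t := by
  cases x with
  | inl a =>
    obtain ⟨hs2, hsd⟩ := h s hs
    obtain ⟨ht2, htd⟩ := h t ht
    exact Prod.ext (FPF.eq_of_dom_eq_insert hs.2.1.le.1 ht.2.1.le.1 hsd htd hsy hty)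
      (hs2.trans ht2.symm)
  | inr b =>
    obtain ⟨hs1, hsd⟩ := h s hs
    obtain ⟨ht1, htd⟩ := h t ht
    exact Prod.ext (hs1.trans ht1.symm)
      (FPF.eq_of_dom_eq_insert hs.2.1.le.2 ht.2.1.le.2 hsd htd hsy hty)

theorem Queries.eq_of_consistent (h : Queries T p x) (hs : ImmSucc T p s)
    (ht : ImmSucc T p t) (hso : Consistent o s) (hto : Consistent o t) : s = t := by
  obtain ⟨y, hsy⟩ := h.exists_answers hs
  obtain ⟨y', hty⟩ := h.exists_answers ht
  obtain rfl : y = y' := (hso x y hsy).symm.trans (hto x y' hty)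
  exact h.eq_of_answers hs ht hsy hty

/-- `p` and `v` cannot part at their last common node, since both continue along the branch
that `o` determines there. -/
theorem IsTotalBiTree.le_of_consistent (hT : IsTotalBiTree T) (hv : IsLeaf T v)
    (hvo : Consistent o v) (hp : p ∈ T) (hpo : Consistent o p) : p ≤ v := by
  have hfin : {t | t ∈ T ∧ t ≤ p ∧ t ≤ v}.Finite :=
    (finite_setOf_le_pair v).subset fun _ ht => ht.2.2
  obtain ⟨w, ⟨hwT, hwp, hwv⟩, hmax⟩ :=
    hfin.exists_maximal ⟨_, hT.1.1, hT.1.2.1 p hp, hT.1.2.1 v hv.1⟩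
  by_contra hpv
  have hwp' : w < p := lt_of_le_of_ne hwp (by rintro rfl; exact hpv hwv)
  have hwv' : w < v := lt_of_le_of_ne hwv (by rintro rfl; exact hv.2 ⟨p, hp, hwp'⟩)
  obtain ⟨x, hx⟩ := hT.exists_queries hwT fun hl => hl.2 ⟨p, hp, hwp'⟩
  obtain ⟨s, hs, hsv⟩ := exists_immSucc_le (finite_setOf_le_pair v) hv.1 hwv'
  obtain ⟨s', hs', hsp⟩ := exists_immSucc_le (finite_setOf_le_pair p) hp hwp'
  obtain rfl := hx.eq_of_consistent hs hs' (hvo.mono hsv) (hpo.mono hsp)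
  exact hs.2.1.not_ge (hmax ⟨hs.1, hsp, hsv⟩ hs.2.1.le)

theorem IsTotalBiTree.wellFoundedTree (hT : IsTotalBiTree T)
    (htot : ∀ o : A ⊕ A → A, ∃ v, IsLeaf T v ∧ Consistent o v) : WellFoundedTree T := by
  rintro ⟨f, hfT, hf⟩
  obtain ⟨o, ho⟩ := exists_consistent_of_monotone hf.monotone
  obtain ⟨v, hv, hvo⟩ := htot o
  exact Set.infinite_range_of_injective hf.injective <| (finite_setOf_le_pair v).subset <|
    Set.range_subset_iff.2 fun n => hT.le_of_consistent hv hvo (hfT n) (ho n)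

end BiTrees

inductive Dialogue (Q R : Type*)
  | ret : R → Dialogue Q R
  | ask : Q → (R → Dialogue Q R) → Dialogue Q R

namespace Dialogue

variable {Q Q' R : Type*}

def eval (o : Q → R) : Dialogue Q R → R
  | ret c => c
  | ask x k => (k (o x)).eval o

/-- The neighbourhood function of a dialogue. -/
def reply (qp : Q → R) (rp : R → R) : Dialogue Q R → List R → R
  | ret c, _ => rp c
  | ask x _, [] => qp x
  | ask _ k, c :: L => (k c).reply qp rp L

theorem exists_interrog (D : Dialogue Q R) (qp : Q → R) (rp : R → R) (o : Q → R) :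
    ∃ L : List R, (∀ j (hj : j < L.length), ∃ x, D.reply qp rp (L.take j) = qp x ∧ o x = L[j])
      ∧ D.reply qp rp L = rp (D.eval o) := by
  induction D with
  | ret c => exact ⟨[], by simp, rfl⟩
  | ask x k ih =>
    obtain ⟨L, hL, hval⟩ := ih (o x)
    refine ⟨o x :: L, fun j hj => ?_, hval⟩
    cases j with
    | zero => exact ⟨x, rfl, rfl⟩
    | succ j => exact hL j (Nat.lt_of_succ_lt_succ hj)

def fixLeft (α : Q → R) : Dialogue (Q ⊕ Q') R → Dialogue Q' R
  | ret c => ret c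
  | ask (.inl a) k => (k (α a)).fixLeft α
  | ask (.inr b) k => ask b fun c => (k c).fixLeft α

theorem eval_fixLeft (α : Q → R) (β : Q' → R) (D : Dialogue (Q ⊕ Q') R) :
    (D.fixLeft α).eval β = D.eval (Sum.elim α β) := by
  induction D with
  | ret c => rfl
  | ask x k ih => cases x <;> exact ih _

def replyLeft (qp : Q' → R) (rp : R → R) : Dialogue (Q ⊕ Q') R → List R → Dialogue Q R
  | ret c, _ => ret (rp c)
  | ask (.inl a) k, L => ask a fun y => (k y).replyLeft qp rp L
  | ask (.inr b) _, [] => ret (qp b)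
  | ask (.inr _) k, c :: L => (k c).replyLeft qp rp L

theorem eval_replyLeft (qp : Q' → R) (rp : R → R) (α : Q → R) (D : Dialogue (Q ⊕ Q') R)
    (L : List R) : (D.replyLeft qp rp L).eval α = (D.fixLeft α).reply qp rp L := by
  induction D generalizing L with
  | ret c => rfl
  | ask x k ih =>
    rcases x with a | b
    · exact ih _ L
    · cases L with
      | nil => rfl
      | cons c L => exact ih c L

end Dialogue

def Dialogue.toK2 (mk : List A → A) (qp rp : A → A) (D : Dialogue A A) (x : A) : A :=
  D.reply qp rp (Function.invFun mk x)

def Dialogue.familyToK2 (mk : List A → A) (qp rp : A → A) (E : A → Dialogue A A) (x : A) : A :=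
  match Function.invFun mk x with
  | [] => x
  | a :: w => (E a).reply qp rp w

section Coding

variable {mk : List A → A} (qp rp : A → A)

theorem Dialogue.phiRel_toK2 (hmk : Function.Injective mk) (D : Dialogue A A) (β : A → A) :
    phiRel mk qp rp (D.toK2 mk qp rp) β (D.eval β) := by
  have h : ∀ w, D.toK2 mk qp rp (mk w) = D.reply qp rp w := fun w =>
    congrArg _ (Function.leftInverse_invFun hmk w)
  obtain ⟨L, hL, hval⟩ := D.exists_interrog qp rp β
  exact ⟨L, fun j hj => by simpa only [h] using hL j hj, by rw [h, hval]⟩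

theorem Dialogue.phiA_familyToK2 (hmk : Function.Injective mk) (E : A → Dialogue A A) (a : A)
    (α : A → A) : phiA mk qp rp a (familyToK2 mk qp rp E) α ((E a).eval α) := by
  have h : ∀ w, familyToK2 mk qp rp E (mk (a :: w)) = (E a).reply qp rp w := fun w => by
    rw [familyToK2, Function.leftInverse_invFun hmk]
  obtain ⟨L, hL, hval⟩ := (E a).exists_interrog qp rp α
  exact ⟨L, fun j hj => by simpa only [h] using hL j hj, by rw [h, hval]⟩

end Coding

section TreeDialogue

variable (T : Set (FPF A × FPF A)) (F : FPF A × FPF A → A)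
  (hwf : WellFounded fun s p : FPF A × FPF A => s ∈ T ∧ p < s)

def treeDialogue : FPF A × FPF A → Dialogue (A ⊕ A) A :=
  hwf.fix fun p rec =>
    if IsLeaf T p then .ret (F p)
    else if hx : ∃ x, Queries T p x then
      .ask hx.choose fun y =>
        if hs : ∃ s, ImmSucc T p s ∧ Answers s hx.choose y then
          rec hs.choose ⟨hs.choose_spec.1.1, hs.choose_spec.1.2.1⟩
        else .ret (F p)
    else .ret (F p)

theorem eval_treeDialogue {o : A ⊕ A → A} {v : FPF A × FPF A} (hT : IsTotalBiTree T)
    (hv : IsLeaf T v) (hvo : Consistent o v) :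
    ∀ p ∈ T, p ≤ v → (treeDialogue T F hwf p).eval o = F v := by
  intro p
  induction p using hwf.induction with
  | _ p ih =>
    intro hp hpv
    rw [treeDialogue, hwf.fix_eq]
    by_cases hl : IsLeaf T p
    · rw [if_pos hl, eq_of_le_of_not_lt hpv fun h => hl.2 ⟨v, hv.1, h⟩]
      rfl
    have hx : ∃ x, Queries T p x := hT.exists_queries hp hl
    obtain ⟨s, hs, hsv⟩ := exists_immSucc_le (finite_setOf_le_pair v) hv.1
      (lt_of_le_of_ne hpv (by rintro rfl; exact hl hv))
    obtain ⟨y, hsy⟩ := hx.choose_spec.exists_answers hs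
    obtain rfl : o hx.choose = y := hvo.mono hsv _ _ hsy
    have hs' : ∃ s, ImmSucc T p s ∧ Answers s hx.choose (o hx.choose) := ⟨s, hs, hsy⟩
    rw [if_neg hl, dif_pos hx, Dialogue.eval, dif_pos hs']
    obtain rfl := hx.choose_spec.eq_of_answers hs'.choose_spec.1 hs hs'.choose_spec.2 hsy
    exact ih _ ⟨hs.1, hs.2.1⟩ hs.1 hsv

end TreeDialogue

theorem statement6_general {A : Type u} (code : List A → A)
    (hcode : Function.Injective code) (q r : A)
    (G : (A → A) → (A → A) → A) (hG : BiSeqTotal G) :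
    ∃ φG : A → A, ∀ α : A → A, ∃ γ : A → A,
      AppRel code (fun x => code [q, x]) (fun x => code [r, x]) φG α γ ∧
      ∀ β : A → A,
        phiRel code (fun x => code [q, x]) (fun x => code [r, x]) γ β (G α β) := by
  obtain ⟨T, F, hT, hTG⟩ := hG
  have htot : ∀ o : A ⊕ A → A, ∃ v, IsLeaf T v ∧ Consistent o v := fun o => by
    obtain ⟨v, hv, hα, hβ, -⟩ := hTG (o ∘ .inl) (o ∘ .inr)
    exact ⟨v, hv, Sum.elim_comp_inl_inr o ▸ Consistent.of_agrees hα hβ⟩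
  let D := treeDialogue T F (hT.wellFoundedTree htot).wellFounded (FPF.empty A, FPF.empty A)
  have hD : ∀ α β, D.eval (Sum.elim α β) = G α β := fun α β => by
    obtain ⟨v, hv, hα, hβ, hGv⟩ := hTG α β
    rw [hGv]
    exact eval_treeDialogue T F _ hT hv (.of_agrees hα hβ) _ hT.1.1 (hT.1.2.1 v hv.1)
  let qp := fun x => code [q, x]
  let rp := fun x => code [r, x]
  let E := fun a => D.replyLeft qp rp (Function.invFun code a)
  refine ⟨Dialogue.familyToK2 code qp rp E,
    fun α => ⟨(D.fixLeft α).toK2 code qp rp, fun a => ?_, fun β => ?_⟩⟩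
  · have h := Dialogue.phiA_familyToK2 qp rp hcode E a α
    rwa [Dialogue.eval_replyLeft] at h
  · simpa only [Dialogue.eval_fixLeft, hD] using (D.fixLeft α).phiRel_toK2 qp rp hcode β

/-- For every total bisequential `G : A^A × A^A → A` there is
`φ_G ∈ A^A` such that `φ_G α` is always defined and `φ(φ_G α, β) = G(α,β)`. -/
theorem statement6 {A : Type u} [Infinite A] (code : List A → A)
    (hcode : Function.Injective code) (q r : A) (hqr : q ≠ r)
    (G : (A → A) → (A → A) → A) (hG : BiSeqTotal G) :
    ∃ φG : A → A, ∀ α : A → A, ∃ γ : A → A,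
      AppRel code (fun x => code [q, x]) (fun x => code [r, x]) φG α γ ∧
      ∀ β : A → A,
        phiRel code (fun x => code [q, x]) (fun x => code [r, x]) γ β (G α β) :=
  statement6_general code hcode q r G hG

end OostenK2
end
end

section
/- There exists an element k ∈ A^A such that for all α, β ∈ A^A: kα is defined, (kα)β is defined, and (kα)β = α, where application is the interrogation-based application on A^A. -/
open Classical

noncomputable section

namespace OostenK2

universe u

variable {A : Type u}

/-! `(kα)β = α` holds if `kα` answers the `a`-interrogation of any `β` at once, by
mapping `⟨a⟩` to `⟨r, α a⟩`. So `k`, on the `x`-interrogation of `α` with `x = ⟨a⟩`,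
queries `α` at `a` and returns `⟨r, ⟨r, α a⟩⟩`. -/

section KCombinator

variable (qp rp : A → A)

-- Only codes `⟨a⟩` of singletons are ever evaluated, so the fallbacks below are arbitrary.
def constRealizer (mk : List A → A) (γ : A → A) : A → A :=
  fun x => rp (γ ((Function.invFun mk x).headD x))

def kRealizer (mk : List A → A) : A → A := fun x =>
  match Function.invFun mk x with
  | [y] => qp ((Function.invFun mk y).headD y)
  | [_, b] => rp (rp b)
  | _ => x

theorem appRel_constRealizer {mk : List A → A} (hmk : Function.Injective mk) (γ β : A → A) :
    AppRel mk qp rp (constRealizer rp mk γ) β γ := fun a =>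
  ⟨[], fun _ hj => absurd hj (Nat.not_lt_zero _), by
    simp only [constRealizer, Function.leftInverse_invFun hmk _, List.headD_cons]⟩

theorem appRel_kRealizer {mk : List A → A} (hmk : Function.Injective mk) (α : A → A) :
    AppRel mk qp rp (kRealizer qp rp mk) α (constRealizer rp mk α) := by
  intro a
  set x := (Function.invFun mk a).headD a
  refine ⟨[α x], fun j hj => ?_, ?_⟩
  · obtain rfl : j = 0 := by simpa using hj
    exact ⟨x, by simp [kRealizer, Function.leftInverse_invFun hmk _, x], rfl⟩
  · simp [kRealizer, constRealizer, Function.leftInverse_invFun hmk _, x]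

end KCombinator

theorem statement7_general {A : Type u} (code : List A → A)
    (hcode : Function.Injective code) (q r : A) :
    ∃ k : A → A, ∀ α : A → A, ∃ kα : A → A,
      AppRel code (fun x => code [q, x]) (fun x => code [r, x]) k α kα ∧
      ∀ β : A → A,
        AppRel code (fun x => code [q, x]) (fun x => code [r, x]) kα β α :=
  ⟨kRealizer _ _ code, fun α => ⟨constRealizer _ code α,
    appRel_kRealizer _ _ hcode α, fun β => appRel_constRealizer _ _ hcode α β⟩⟩

/-- There is `k ∈ A^A` with `kα` and `(kα)β` always defined and
`(kα)β = α`, for the interrogation-based application on `A^A`. -/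
theorem statement7 {A : Type u} [Infinite A] (code : List A → A)
    (hcode : Function.Injective code) (q r : A) (hqr : q ≠ r) :
    ∃ k : A → A, ∀ α : A → A, ∃ kα : A → A,
      AppRel code (fun x => code [q, x]) (fun x => code [r, x]) k α kα ∧
      ∀ β : A → A,
        AppRel code (fun x => code [q, x]) (fun x => code [r, x]) kα β α :=
  statement7_general code hcode q r

end OostenK2
end
end

section
/- For an infinite set A, the set A^A of all functions A → A, equipped with the interrogation-based partial application (α,β) ↦ αβ, is a partial combinatory algebra: there exist elements k, s ∈ A^A with kαβ = α always defined, sαβ always defined, and sαβγ ≃ (αγ)(βγ). -/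
open Classical

noncomputable section

namespace OostenK2

universe u

variable {A : Type u}

/-!
An element `α` of `A^A` acts on input `a` as a dialogue: after the answers `L` it asks `⟨q, b⟩`,
returns `⟨r, c⟩` or is stuck, according to `α ⟨a, L⟩`. A family of finite computations querying
oracles `x₀, …, xₙ` is realized pointwise by an element of `A^A`, and abstracting `x₀` (answering
its queries from the list `L`) gives an element whose application to `β` realizes the family at
`x₀ := β`. So `k` is the double abstraction of the projection `(x, y) ↦ x`, and `s` that of a
machine interrogating `z` by simulating `((x z)(y z))(a)`. Since each of its steps consumes an
answer of `z`, its next move is a finite computation in `x` and `y`.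
-/

inductive Instr (A : Type u) : Type u
  | ask (b : A)
  | ret (c : A)
  | stuck

/-- A strategy for interrogating an oracle: the next instruction, given the answers so far. -/
abbrev Dialogue_s8 (A : Type u) : Type u := List A → Instr A

namespace Dialogue_s8

inductive Returns (β : A → A) : Dialogue_s8 A → List A → A → Prop
  | ret {D : Dialogue_s8 A} {c : A} : D [] = .ret c → Returns β D [] c
  | ask {D : Dialogue_s8 A} {b : A} {M : List A} {c : A} :
      D [] = .ask b → Returns β (fun L => D (β b :: L)) M c → Returns β D (β b :: M) c

def Yields (β : A → A) (D : Dialogue_s8 A) (c : A) : Prop := ∃ M, Returns β D M c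

variable {β : A → A} {D : Dialogue_s8 A} {M : List A} {c : A}

theorem returns_nil_iff : Returns β D [] c ↔ D [] = .ret c :=
  ⟨fun h => by cases h; assumption, .ret⟩

theorem returns_cons_iff {v : A} :
    Returns β D (v :: M) c ↔
      ∃ b, D [] = .ask b ∧ β b = v ∧ Returns β (fun L => D (v :: L)) M c := by
  constructor
  · rintro (_ | ⟨hb, h⟩)
    exact ⟨_, hb, rfl, h⟩
  · rintro ⟨b, hb, rfl, h⟩
    exact .ask hb h

theorem returns_iff :
    Returns β D M c ↔
      (∀ j (hj : j < M.length), ∃ b, D (M.take j) = .ask b ∧ β b = M[j]) ∧ D M = .ret c := by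
  induction M generalizing D with
  | nil => simp [returns_nil_iff]
  | cons v M ih =>
    rw [returns_cons_iff]
    simp only [ih, List.length_cons, List.getElem_cons]
    constructor
    · rintro ⟨b, hb, rfl, hM, hret⟩
      refine ⟨fun j hj => ?_, hret⟩
      cases j with
      | zero => exact ⟨b, hb, rfl⟩
      | succ j => simpa using hM j (by omega)
    · rintro ⟨hM, hret⟩
      obtain ⟨b, hb, hv⟩ := hM 0 (by omega)
      exact ⟨b, hb, hv, fun j hj => by simpa using hM (j + 1) (by omega), hret⟩

theorem Returns.unique {M' : List A} {c' : A} (h : Returns β D M c) (h' : Returns β D M' c') :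
    M = M' ∧ c = c' := by
  induction h generalizing M' with
  | ret hD =>
    cases h' with
    | ret hD' => simp_all
    | ask hD' => simp_all
  | ask hD _ ih =>
    cases h' with
    | ret hD' => simp_all
    | ask hD' h' =>
      obtain rfl : _ = _ := Instr.ask.inj (hD.symm.trans hD')
      simpa using ih h'

theorem Yields.unique {c' : A} (h : Yields β D c) (h' : Yields β D c') : c = c' :=
  (h.choose_spec.unique h'.choose_spec).2

theorem returns_iff_of_nil_eq_ret {c' : A} (hD : D [] = .ret c') :
    Returns β D M c ↔ M = [] ∧ c' = c := by
  refine ⟨fun h => ?_, fun ⟨hM, hc⟩ => hM ▸ hc ▸ .ret hD⟩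
  obtain ⟨hM, hc⟩ := (Returns.ret hD).unique h
  exact ⟨hM.symm, hc⟩

theorem not_returns_of_nil_eq_stuck (hD : D [] = .stuck) : ¬Returns β D M c := by
  rintro (h | h) <;> simp_all

/-- After `D₁` returns `d`, a dummy query at `e` precedes `D₂ d`: every step then consumes an
answer, which keeps compositions such as `ListCoding.simulate` structurally recursive. -/
def seq (D₁ : Dialogue_s8 A) (D₂ : A → Dialogue_s8 A) (e : A) : Dialogue_s8 A
  | [] =>
    match D₁ [] with
    | .ask b => .ask b
    | .ret _ => .ask e
    | .stuck => .stuck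
  | v :: L =>
    match D₁ [] with
    | .ask _ => seq (fun L' => D₁ (v :: L')) D₂ e L
    | .ret d => D₂ d L
    | .stuck => .stuck

theorem returns_seq_iff {D₁ : Dialogue_s8 A} {D₂ : A → Dialogue_s8 A} {e : A} :
    Returns β (seq D₁ D₂ e) M c ↔
      ∃ M₁ d M₂, M = M₁ ++ β e :: M₂ ∧ Returns β D₁ M₁ d ∧ Returns β (D₂ d) M₂ c := by
  constructor
  · induction M generalizing D₁ with
    | nil =>
      rw [returns_nil_iff]
      cases hD : D₁ [] <;> simp [seq, hD]
    | cons v M ih =>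
      rw [returns_cons_iff]
      rintro ⟨b, hb, hv, h⟩
      cases hD : D₁ [] with
      | ask b' =>
        obtain rfl : b' = b := by simpa [seq, hD] using hb
        obtain ⟨M₁, d, M₂, rfl, h₁, h₂⟩ := ih (D₁ := fun L => D₁ (v :: L)) (by simpa [seq, hD] using h)
        exact ⟨v :: M₁, d, M₂, rfl, returns_cons_iff.2 ⟨b', hD, hv, h₁⟩, h₂⟩
      | ret d =>
        obtain rfl : e = b := by simpa [seq, hD] using hb
        exact ⟨[], d, M, by simp [hv], .ret hD, by simpa [seq, hD] using h⟩
      | stuck => simp [seq, hD] at hb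
  · rintro ⟨M₁, d, M₂, rfl, h₁, h₂⟩
    induction h₁ with
    | ret hD =>
      refine .ask (by simp [seq, hD]) ?_
      simpa [seq, hD] using h₂
    | ask hD _ ih =>
      refine .ask (by simp [seq, hD]) ?_
      simpa [seq, hD] using ih h₂

theorem returns_seq_iff_of_returns {D₁ : Dialogue_s8 A} {D₂ : A → Dialogue_s8 A} {e : A}
    {M₁ : List A} {d : A} (h₁ : Returns β D₁ M₁ d) :
    Returns β (seq D₁ D₂ e) M c ↔ ∃ M₂, M = M₁ ++ β e :: M₂ ∧ Returns β (D₂ d) M₂ c := by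
  rw [returns_seq_iff]
  constructor
  · rintro ⟨M₁', d', M₂, rfl, h₁', h₂⟩
    obtain ⟨rfl, rfl⟩ := h₁.unique h₁'
    exact ⟨M₂, rfl, h₂⟩
  · rintro ⟨M₂, rfl, h₂⟩
    exact ⟨M₁, d, M₂, rfl, h₁, h₂⟩

theorem yields_seq_iff {D₁ : Dialogue_s8 A} {D₂ : A → Dialogue_s8 A} {e : A} :
    Yields β (seq D₁ D₂ e) c ↔ ∃ d, Yields β D₁ d ∧ Yields β (D₂ d) c := by
  simp only [Yields, returns_seq_iff]
  constructor
  · rintro ⟨_, M₁, d, M₂, -, h₁, h₂⟩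
    exact ⟨d, ⟨M₁, h₁⟩, ⟨M₂, h₂⟩⟩
  · rintro ⟨d, ⟨M₁, h₁⟩, ⟨M₂, h₂⟩⟩
    exact ⟨_, M₁, d, M₂, rfl, h₁, h₂⟩

end Dialogue_s8

inductive OracleTree (ι : Type) (A X : Type u) : Type u
  | pure (x : X)
  | query (i : ι) (p : A) (k : A → OracleTree ι A X)

namespace OracleTree

variable {ι : Type} {X Y : Type u}

def eval (o : ι → A → A) : OracleTree ι A X → X
  | pure x => x
  | query i p k => (k (o i p)).eval o

def map (f : X → Y) : OracleTree ι A X → OracleTree ι A Y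
  | pure x => pure (f x)
  | query i p k => query i p fun v => (k v).map f

@[simp]
theorem eval_map (o : ι → A → A) (f : X → Y) (t : OracleTree ι A X) :
    (t.map f).eval o = f (t.eval o) := by
  induction t with
  | pure x => rfl
  | query i p k ih => exact ih _

/-- The next instruction of the dialogue with oracle `0` after its answers `M`; the queries to
the other oracles are kept. -/
def feed {n : ℕ} : OracleTree (Fin (n + 1)) A A → List A → OracleTree (Fin n) A (Instr A)
  | pure x => fun M =>
    pure (match M with
      | [] => .ret x
      | _ :: _ => .stuck)
  | query i p k => fun M =>
    Fin.cases (motive := fun _ => OracleTree (Fin n) A (Instr A))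
      (match M with
        | [] => pure (.ask p)
        | v :: M => (k v).feed M)
      (fun j => query j p fun v => (k v).feed M) i

theorem yields_feed {n : ℕ} (o : Fin n → A → A) (β : A → A) (t : OracleTree (Fin (n + 1)) A A) :
    Dialogue_s8.Yields β (fun M => (t.feed M).eval o) (t.eval (Fin.cons β o)) := by
  induction t with
  | pure x => exact ⟨[], .ret rfl⟩
  | query i p k ih =>
    cases i using Fin.cases with
    | zero =>
      obtain ⟨M, h⟩ := ih (β p)
      exact ⟨β p :: M, .ask (by simp [feed, eval]) (by simpa [feed, eval] using h)⟩
    | succ j => simpa [feed, eval] using ih (o j p)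

end OracleTree

structure ListCoding (A : Type u) where
  code : List A → A
  code_injective : Function.Injective code
  q : A
  r : A
  q_ne_r : q ≠ r

def realize {n : ℕ} (s : A → OracleTree (Fin n) A A) (x : Fin n → A → A) : A → A :=
  fun p => (s p).eval x

def kTree : A → OracleTree (Fin 2) A A := fun p => .query 1 p .pure

namespace ListCoding

variable (C : ListCoding A)

abbrev K₂ : PCAStruct (A → A) := K2 C.code (fun x => C.code [C.q, x]) (fun x => C.code [C.r, x])

def enc : Instr A → A
  | .ask b => C.code [C.q, b]
  | .ret c => C.code [C.r, c]
  | .stuck => C.code []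

def dec (v : A) : Instr A :=
  match Function.partialInv C.code v with
  | some [t, b] => if t = C.q then .ask b else if t = C.r then .ret b else .stuck
  | _ => .stuck

@[simp]
theorem dec_enc (i : Instr A) : C.dec (C.enc i) = i := by
  cases i <;> simp [dec, enc, Function.partialInv_left C.code_injective, C.q_ne_r.symm]

theorem dec_eq_iff {v : A} {i : Instr A} (hi : i ≠ .stuck) : C.dec v = i ↔ C.enc i = v := by
  refine ⟨fun h => ?_, fun h => h ▸ C.dec_enc i⟩
  subst h
  unfold dec at hi ⊢
  split at hi
  · rename_i t b h
    rw [C.code_injective.isPartialInv] at h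
    subst h
    split_ifs at hi ⊢ <;> simp_all [enc]
  · exact absurd rfl hi

def dialogue (α : A → A) (a : A) : Dialogue_s8 A := fun L => C.dec (α (C.code (a :: L)))

theorem phiA_iff {a : A} {α β : A → A} {c : A} :
    phiA C.code (fun x => C.code [C.q, x]) (fun x => C.code [C.r, x]) a α β c ↔
      (C.dialogue α a).Yields β c := by
  have hask (v b : A) : C.dec v = .ask b ↔ v = C.code [C.q, b] :=
    (C.dec_eq_iff (by simp)).trans eq_comm
  have hret (v c : A) : C.dec v = .ret c ↔ v = C.code [C.r, c] :=
    (C.dec_eq_iff (by simp)).trans eq_comm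
  simp only [phiA, AInterrog, Dialogue_s8.Yields, Dialogue_s8.returns_iff, dialogue, hask, hret]

theorem mem_app_iff {α β γ : A → A} :
    γ ∈ C.K₂.app α β ↔ ∀ a, (C.dialogue α a).Yields β (γ a) := by
  simp only [← phiA_iff]
  constructor
  · rintro ⟨h, rfl⟩ a
    exact (h a).choose_spec
  · intro h
    refine ⟨fun a => ⟨γ a, h a⟩, funext fun a => ?_⟩
    exact (C.phiA_iff.1 (Exists.choose_spec _)).unique (C.phiA_iff.1 (h a))

theorem app_eq_some {α β γ : A → A} (h : ∀ a, (C.dialogue α a).Yields β (γ a)) :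
    C.K₂.app α β = Part.some γ :=
  Part.eq_some_iff.2 (C.mem_app_iff.2 h)

def machineOf {ι : Type} (s : A → List A → OracleTree ι A (Instr A)) (P : A) : OracleTree ι A A :=
  match Function.partialInv C.code P with
  | some (p :: M) => (s p M).map C.enc
  | _ => .pure (C.enc .stuck)

theorem dialogue_realize_machineOf {n : ℕ} (s : A → List A → OracleTree (Fin n) A (Instr A))
    (x : Fin n → A → A) (p : A) :
    C.dialogue (realize (C.machineOf s) x) p = fun M => (s p M).eval x := by
  funext M
  simp [dialogue, realize, machineOf, Function.partialInv_left C.code_injective]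

def lam {n : ℕ} (s : A → OracleTree (Fin (n + 1)) A A) : A → OracleTree (Fin n) A A :=
  C.machineOf fun p => (s p).feed

theorem app_realize_lam {n : ℕ} (s : A → OracleTree (Fin (n + 1)) A A) (x : Fin n → A → A)
    (β : A → A) : C.K₂.app (realize (C.lam s) x) β = Part.some (realize s (Fin.cons β x)) :=
  C.app_eq_some fun p => by
    rw [lam, dialogue_realize_machineOf]
    exact (s p).yields_feed x β

end ListCoding

inductive SimCont (A : Type u) : Type u
  | afterX (a : A)
  | afterY (a : A)
  | main (a : A) (T : List A)
  | reply (a : A) (T : List A)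

/-- `.run i w as k`: oracle `i` (of `![y, x]`, so `1` is `x`) interrogates `z` on input `w`, has
received the answers `as`, and passes its result to `k`. -/
inductive SimState (A : Type u) : Type u
  | run (i : Fin 2) (w : A) (as : List A) (k : SimCont A)
  | halt (c : A)
  | dead

/-- `(x z)(a)` and `(y z)(a)` are computed first, so that the simulation diverges on `a` when
`x z` or `y z` does. -/
def SimState.init (a : A) : SimState A := .run 1 a [] (.afterX a)

namespace ListCoding

variable (C : ListCoding A)

/-- The next round of the `a`-interrogation of `y z` by `x z`, after the answers `T`. -/
def round (a : A) (T : List A) : SimState A := .run 1 (C.code (a :: T)) [] (.main a T)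

def resume : SimCont A → A → SimState A
  | .afterX a, _ => .run 0 a [] (.afterY a)
  | .afterY a, _ => C.round a []
  | .main a T, d =>
    match C.dec d with
    | .ask b => .run 0 b [] (.reply a T)
    | .ret c => .halt c
    | .stuck => .dead
  | .reply a T, e => C.round a (T ++ [e])

def simulate : SimState A → List A → OracleTree (Fin 2) A (Instr A)
  | .run i w as _, [] =>
    .query i (C.code (w :: as)) fun d =>
      .pure (match C.dec d with
        | .ask b => .ask b
        | .ret _ => .ask (C.code [])
        | .stuck => .stuck)
  | .run i w as k, v :: L =>
    .query i (C.code (w :: as)) fun d =>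
      match C.dec d with
      | .ask _ => simulate (.run i w (as ++ [v]) k) L
      | .ret d => simulate (C.resume k d) L
      | .stuck => .pure .stuck
  | .halt c, [] => .pure (.ret c)
  | .halt _, _ :: _ => .pure .stuck
  | .dead, _ => .pure .stuck

def simDialogue (x : Fin 2 → A → A) (s : SimState A) : Dialogue_s8 A :=
  fun L => (C.simulate s L).eval x

variable (x : Fin 2 → A → A)

theorem simDialogue_run (i : Fin 2) (w : A) (as : List A) (k : SimCont A) :
    C.simDialogue x (.run i w as k) =
      Dialogue_s8.seq (fun L => C.dialogue (x i) w (as ++ L))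
        (fun d => C.simDialogue x (C.resume k d)) (C.code []) := by
  funext L
  induction L generalizing as with
  | nil =>
    simp only [simDialogue, simulate, OracleTree.eval, Dialogue_s8.seq, dialogue, List.append_nil]
  | cons v L ih =>
    simp only [simDialogue, simulate, OracleTree.eval, Dialogue_s8.seq, dialogue, List.append_nil]
    cases C.dec (x i (C.code (w :: as))) with
    | ask b =>
      exact (ih (as ++ [v])).trans (by simp [dialogue])
    | ret d => rfl
    | stuck => rfl

theorem simDialogue_run_nil (i : Fin 2) (w : A) (k : SimCont A) :
    C.simDialogue x (.run i w [] k) =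
      Dialogue_s8.seq (C.dialogue (x i) w) (fun d => C.simDialogue x (C.resume k d)) (C.code []) :=
  C.simDialogue_run x i w [] k

variable {x} {z u v : A → A}

theorem yields_of_returns_round
    (hu : ∀ w, (C.dialogue (x 1) w).Yields z (u w)) (hv : ∀ w, (C.dialogue (x 0) w).Yields z (v w))
    {a c : A} {T M : List A}
    (h : (C.simDialogue x (C.round a T)).Returns z M c) :
    Dialogue_s8.Yields v (fun L => C.dialogue u a (T ++ L)) c := by
  induction hM : M.length using Nat.strong_induction_on generalizing T M with
  | _ n ih =>
    obtain ⟨M₁, hM₁⟩ := hu (C.code (a :: T))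
    rw [round, simDialogue_run_nil, Dialogue_s8.returns_seq_iff_of_returns hM₁] at h
    obtain ⟨M₂, rfl, h⟩ := h
    cases hd : C.dec (u (C.code (a :: T))) with
    | ask b =>
      obtain ⟨M₃, hM₃⟩ := hv b
      rw [resume, hd, simDialogue_run_nil, Dialogue_s8.returns_seq_iff_of_returns hM₃] at h
      obtain ⟨M₄, rfl, h⟩ := h
      obtain ⟨N, hN⟩ := ih M₄.length (by simp at hM; omega) h rfl
      exact ⟨v b :: N, .ask (by simpa [dialogue] using hd) (by simpa using hN)⟩
    | ret c' =>
      rw [resume, hd, Dialogue_s8.returns_iff_of_nil_eq_ret rfl] at h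
      obtain ⟨rfl, rfl⟩ := h
      exact ⟨[], .ret (by simpa [dialogue] using hd)⟩
    | stuck =>
      rw [resume, hd] at h
      exact absurd h (Dialogue_s8.not_returns_of_nil_eq_stuck rfl)

theorem yields_round_of_returns
    (hu : ∀ w, (C.dialogue (x 1) w).Yields z (u w)) (hv : ∀ w, (C.dialogue (x 0) w).Yields z (v w))
    {a c : A} {T N : List A}
    (h : Dialogue_s8.Returns v (fun L => C.dialogue u a (T ++ L)) N c) :
    (C.simDialogue x (C.round a T)).Yields z c := by
  induction N generalizing T with
  | nil =>
    rw [Dialogue_s8.returns_nil_iff] at h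
    obtain ⟨M₁, hM₁⟩ := hu (C.code (a :: T))
    refine ⟨M₁ ++ [z (C.code [])], ?_⟩
    rw [round, simDialogue_run_nil, Dialogue_s8.returns_seq_iff_of_returns hM₁]
    refine ⟨[], rfl, ?_⟩
    simp only [dialogue, List.append_nil] at h
    rw [resume, h]
    exact .ret rfl
  | cons e N ih =>
    obtain ⟨b, hb, rfl, h⟩ := Dialogue_s8.returns_cons_iff.1 h
    obtain ⟨M', hM'⟩ := ih (T := T ++ [v b]) (by simpa using h)
    obtain ⟨M₁, hM₁⟩ := hu (C.code (a :: T))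
    obtain ⟨M₃, hM₃⟩ := hv b
    refine ⟨M₁ ++ z (C.code []) :: (M₃ ++ z (C.code []) :: M'), ?_⟩
    simp only [dialogue, List.append_nil] at hb
    rw [round, simDialogue_run_nil, Dialogue_s8.returns_seq_iff_of_returns hM₁]
    refine ⟨_, rfl, ?_⟩
    rw [resume, hb, simDialogue_run_nil, Dialogue_s8.returns_seq_iff_of_returns hM₃]
    exact ⟨M', rfl, hM'⟩

theorem yields_init_iff {a c : A} :
    (C.simDialogue x (SimState.init a)).Yields z c ↔
      (∃ d, (C.dialogue (x 1) a).Yields z d) ∧ (∃ e, (C.dialogue (x 0) a).Yields z e) ∧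
        (C.simDialogue x (C.round a [])).Yields z c := by
  simp only [SimState.init, simDialogue_run_nil, Dialogue_s8.yields_seq_iff, resume]
  constructor
  · rintro ⟨d, hd, e, he, h⟩
    exact ⟨⟨d, hd⟩, ⟨e, he⟩, h⟩
  · rintro ⟨⟨d, hd⟩, ⟨e, he⟩, h⟩
    exact ⟨d, hd, e, he, h⟩

def sTree : A → OracleTree (Fin 2) A A := C.machineOf fun a => C.simulate (SimState.init a)

theorem dialogue_realize_sTree (x : Fin 2 → A → A) (a : A) :
    C.dialogue (realize C.sTree x) a = C.simDialogue x (SimState.init a) :=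
  C.dialogue_realize_machineOf _ x a

theorem app_realize_sTree (x y z : A → A) :
    C.K₂.app (realize C.sTree ![y, x]) z = pap C.K₂ (C.K₂.app x z) (C.K₂.app y z) := by
  ext γ
  simp only [pap, Part.mem_bind_iff, C.mem_app_iff, dialogue_realize_sTree, yields_init_iff]
  constructor
  · intro h
    choose u hu using fun a => (h a).1
    choose v hv using fun a => (h a).2.1
    exact ⟨u, hu, v, hv, fun a => C.yields_of_returns_round hu hv (h a).2.2.choose_spec⟩
  · rintro ⟨u, hu, v, hv, hγ⟩ a
    obtain ⟨N, hN⟩ := hγ a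
    exact ⟨⟨_, hu a⟩, ⟨_, hv a⟩, C.yields_round_of_returns hu hv (T := []) hN⟩

theorem isPCA : IsPCA C.K₂ := by
  refine ⟨realize (C.lam (C.lam kTree)) ![], realize (C.lam (C.lam C.sTree)) ![],
    fun x y => ?_, fun x y => ?_, fun x y z => ?_⟩ <;>
    simp only [pap, app_realize_lam, Part.bind_some]
  · rfl
  · trivial
  · exact C.app_realize_sTree x y z

end ListCoding

theorem statement8_general {A : Type u} (code : List A → A)
    (hcode : Function.Injective code) (q r : A) (hqr : q ≠ r) :
    IsPCA (K2 code (fun x => code [q, x]) (fun x => code [r, x])) :=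
  ListCoding.isPCA ⟨code, hcode, q, r, hqr⟩

/-- For an infinite set `A`, the set `A^A` with the
interrogation-based partial application is a partial combinatory algebra. -/
theorem statement8 {A : Type u} [Infinite A] (code : List A → A)
    (hcode : Function.Injective code) (q r : A) (hqr : q ≠ r) :
    IsPCA (K2 code (fun x => code [q, x]) (fun x => code [r, x])) :=
  statement8_general code hcode q r hqr

end OostenK2
end
end

section
/- Let A be a partial combinatory algebra and let K₂(A) be the interrogation-based partial combinatory algebra on A^A. The map γ(a) = {â}, where â is the constant function with value a, is a decidable applicative morphism A → K₂(A); moreover, every total function A → A is representable with respect to γ. -/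
open Classical

noncomputable section

namespace OostenK2

universe u

variable {A : Type u}

/-! For `F : A → A → A`, the element of `K₂(A)` which on input `a` asks its argument `β` for
`β a` and then answers `F a (β a)` computes `β ↦ (a ↦ F a (β a))`. Applied to a constant
function `x̂` it yields `a ↦ F a x`, so taking for `F` suitable functions of the second argument
(including a nested machine of the same kind, for application) gives realizers for all three
claims. Reading off the value of such an application needs that application in `K₂(A)` is
single-valued: two `a`-interrogations that end in a result coincide, since each answer determines
the next query. -/

section Interrogation

variable {mk : List A → A} {qp rp : A → A} {a : A} {α β : A → A}

theorem AInterrog.take_eq (hqp : Function.Injective qp) {L L' : List A}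
    (h : AInterrog mk qp a α β L) (h' : AInterrog mk qp a α β L') :
    ∀ j ≤ L.length, j ≤ L'.length → L.take j = L'.take j
  | 0, _, _ => by simp
  | j + 1, hj, hj' => by
    have ih := h.take_eq hqp h' j (by omega) (by omega)
    obtain ⟨b, hb, hbL⟩ := h j hj
    obtain ⟨b', hb', hbL'⟩ := h' j hj'
    rw [ih, hb'] at hb
    rw [List.take_succ_eq_append_getElem hj, List.take_succ_eq_append_getElem hj', ih,
      ← hbL, ← hbL', hqp hb]

theorem AInterrog.length_le_of_result (hqp : Function.Injective qp)
    (hdisj : ∀ b c, qp b ≠ rp c) {L L' : List A} {c : A}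
    (h : AInterrog mk qp a α β L) (h' : AInterrog mk qp a α β L')
    (hc : α (mk (a :: L)) = rp c) : L'.length ≤ L.length := by
  by_contra! hlt
  obtain ⟨b, hb, -⟩ := h' L.length hlt
  rw [← h.take_eq hqp h' _ le_rfl hlt.le, List.take_length, hc] at hb
  exact hdisj b c hb.symm

theorem phiA_unique (hqp : Function.Injective qp) (hrp : Function.Injective rp)
    (hdisj : ∀ b c, qp b ≠ rp c) {c c' : A} (h : phiA mk qp rp a α β c)
    (h' : phiA mk qp rp a α β c') : c = c' := by
  obtain ⟨L, hL, hc⟩ := h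
  obtain ⟨L', hL', hc'⟩ := h'
  have hlen : L.length = L'.length :=
    le_antisymm (hL'.length_le_of_result hqp hdisj hL hc')
      (hL.length_le_of_result hqp hdisj hL' hc)
  have hLL' : L = L' := by
    rw [← List.take_length (l := L), hL.take_eq hqp hL' _ le_rfl hlen.le, hlen,
      List.take_length]
  subst hLL'
  exact hrp (hc.symm.trans hc')

theorem K2_app_eq_some_of_appRel (hqp : Function.Injective qp) (hrp : Function.Injective rp)
    (hdisj : ∀ b c, qp b ≠ rp c) {γ : A → A} (h : AppRel mk qp rp α β γ) :
    (K2 mk qp rp).app α β = Part.some γ := by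
  have hdom : ∀ a, ∃ c, phiA mk qp rp a α β c := fun a => ⟨γ a, h a⟩
  exact Part.eq_some_iff.mpr
    ⟨hdom, funext fun a => phiA_unique hqp hrp hdisj (hdom a).choose_spec (h a)⟩

end Interrogation

def pointwiseMachine (mk : List A → A) (qp rp : A → A) (F : A → A → A) (w : A) : A :=
  match Function.invFun mk w with
  | [a] => qp a
  | [a, v] => rp (F a v)
  | _ => w

theorem appRel_pointwiseMachine {mk : List A → A} (hmk : Function.Injective mk) (qp rp : A → A)
    (F : A → A → A) (β : A → A) :
    AppRel mk qp rp (pointwiseMachine mk qp rp F) β (fun a => F a (β a)) := by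
  have hinv := Function.leftInverse_invFun hmk
  refine fun a => ⟨[β a], fun j hj => ?_, by simp [pointwiseMachine, hinv _]⟩
  obtain rfl : j = 0 := by simpa using hj
  exact ⟨a, by simp [pointwiseMachine, hinv _], rfl⟩

theorem statement9_general {A : Type u} (code : List A → A)
    (hcode : Function.Injective code) (q r : A) (hqr : q ≠ r)
    (S : PCAStruct A) (t f : A) :
    IsAppMor S (K2 code (fun x => code [q, x]) (fun x => code [r, x]))
      (fun a => {Function.const A a}) ∧
    IsDecidableMor (K2 code (fun x => code [q, x]) (fun x => code [r, x]))
      (fun a => {Function.const A a}) t f (Function.const A t) (Function.const A f) ∧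
    ∀ g : A → A, ∃ rg,
      RepresentsPFun (K2 code (fun x => code [q, x]) (fun x => code [r, x]))
        (fun a => {Function.const A a}) (fun a => some (g a)) rg := by
  set qp : A → A := fun x => code [q, x]
  set rp : A → A := fun x => code [r, x]
  have hqp : Function.Injective qp := fun _ _ h => (List.cons.inj (List.cons.inj (hcode h)).2).1
  have hrp : Function.Injective rp := fun _ _ h => (List.cons.inj (List.cons.inj (hcode h)).2).1
  have hdisj : ∀ b c, qp b ≠ rp c := fun _ _ h => hqr (List.cons.inj (hcode h)).1
  have happ (F : A → A → A) (x : A) :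
      (K2 code qp rp).app (pointwiseMachine code qp rp F) (Function.const A x) =
        Part.some fun a => F a x :=
    K2_app_eq_some_of_appRel hqp hrp hdisj (appRel_pointwiseMachine hcode qp rp F _)
  refine ⟨⟨fun _ => Set.singleton_nonempty _, ?_⟩, ?_, fun g => ?_⟩
  · refine ⟨pointwiseMachine code qp rp fun a v =>
      pointwiseMachine code qp rp (fun _ v' => (S.app v v').getOrElse v') a, ?_⟩
    rintro x x' z hz _ rfl _ rfl
    refine ⟨Function.const A z, ?_, rfl⟩
    simp only [pap, happ, Part.bind_some, Part.getOrElse_of_dom _ hz.1, Part.get_eq_of_mem hz]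
    exact Part.mem_some _
  · exact ⟨pointwiseMachine code qp rp fun _ v => v,
      by rintro _ rfl; exact happ _ t, by rintro _ rfl; exact happ _ f⟩
  · refine ⟨pointwiseMachine code qp rp fun _ v => g v, ?_⟩
    rintro a _ hx _ rfl
    cases Option.some.inj hx
    exact ⟨_, (happ _ a).symm ▸ Part.mem_some _, rfl⟩

/-- For a pca `A`, the map `γ(a) = {â}` (constant functions) is
a decidable applicative morphism `A → K₂(A)`, and every total function `A → A`
is representable w.r.t. `γ`. -/
theorem statement9 {A : Type u} (code : List A → A)
    (hcode : Function.Injective code) (q r : A) (hqr : q ≠ r)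
    (S : PCAStruct A) (hS : IsPCA S) (t f : A) (hb : IsBooleans S t f) :
    IsAppMor S (K2 code (fun x => code [q, x]) (fun x => code [r, x]))
      (fun a => {Function.const A a}) ∧
    IsDecidableMor (K2 code (fun x => code [q, x]) (fun x => code [r, x]))
      (fun a => {Function.const A a}) t f (Function.const A t) (Function.const A f) ∧
    ∀ g : A → A, ∃ rg,
      RepresentsPFun (K2 code (fun x => code [q, x]) (fun x => code [r, x]))
        (fun a => {Function.const A a}) (fun a => some (g a)) rg :=
  statement9_general code hcode q r hqr S t f

end OostenK2
end
end
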